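/- arXiv:0902.3056 — 3 statements merged into one kernel-verified Lean document; each statement's English description precedes it below -/
import Mathlib

section
/- Let E : X₁ × ⋯ × X_k → S be a classical-quantum channel on a k-fold product of finite sets. Then C(E) ≥ Σ_{i=1}^k min_{F_i ∈ C_i} C(F_i), where C_i is the set of E-derived channels on X_i. -/
open Matrix BigOperators
open scoped Kronecker ComplexOrder

noncomputable section

section QIT
variable {n : Type*} [Fintype n] [DecidableEq n]

/-- A density matrix: positive semidefinite with unit trace. -/
def IsDensity (ρ : Matrix n n ℂ) : Prop := ρ.PosSemidef ∧ ρ.trace = 1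

/-- Apply a real function to a Hermitian matrix via its spectral decomposition
(junk value `0` on non-Hermitian matrices). -/
def matFun (f : ℝ → ℝ) (A : Matrix n n ℂ) : Matrix n n ℂ :=
  if h : A.IsHermitian then
    (h.eigenvectorUnitary : Matrix n n ℂ) *
      Matrix.diagonal (fun i => (f (h.eigenvalues i) : ℂ)) *
      ((h.eigenvectorUnitary : Matrix n n ℂ))ᴴ
  else 0

/-- von Neumann entropy (in bits). -/
def vnEntropy (A : Matrix n n ℂ) : ℝ :=
  if h : A.IsHermitian then (∑ i, Real.negMulLog (h.eigenvalues i)) / Real.log 2 else 0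

/-- Quantum relative entropy `S(ρ‖σ) = Tr ρ (log ρ − log σ)` (in bits). -/
def relEntropy (ρ σ : Matrix n n ℂ) : ℝ :=
  ((ρ * (matFun Real.log ρ - matFun Real.log σ)).trace).re / Real.log 2

/-- Trace norm of a Hermitian matrix: sum of absolute values of eigenvalues. -/
def traceNorm (A : Matrix n n ℂ) : ℝ :=
  if h : A.IsHermitian then ∑ i, |h.eigenvalues i| else 0

end QIT

section Bipartite
variable {a b : Type*} [Fintype a] [Fintype b] [DecidableEq a] [DecidableEq b]

/-- Partial trace over the second subsystem. -/
def ptraceR (M : Matrix (a × b) (a × b) ℂ) : Matrix a a ℂ :=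
  fun i j => ∑ k, M (i, k) (j, k)

/-- Partial trace over the first subsystem. -/
def ptraceL (M : Matrix (a × b) (a × b) ℂ) : Matrix b b ℂ :=
  fun i j => ∑ k, M (k, i) (k, j)

/-- Quantum mutual information `I(A:B) = S(A) + S(B) − S(AB)` of a bipartite state. -/
def mutualInfo (ρ : Matrix (a × b) (a × b) ℂ) : ℝ :=
  vnEntropy (ptraceR ρ) + vnEntropy (ptraceL ρ) - vnEntropy ρ

end Bipartite

section CQ
variable {X m : Type*} [Fintype X] [Fintype m] [DecidableEq X] [DecidableEq m]

/-- The classical-quantum state `E_{x←p}[|x⟩⟨x| ⊗ ρ_x]`. -/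
def cqState (p : X → ℝ) (ρ : X → Matrix m m ℂ) : Matrix (X × m) (X × m) ℂ :=
  fun xi yj => if xi.1 = yj.1 then (p xi.1 : ℂ) * ρ xi.1 xi.2 yj.2 else 0

end CQ

/-- Probability distributions on a finite type. -/
def FinDist (X : Type*) [Fintype X] : Type _ :=
  {p : X → ℝ // (∀ x, 0 ≤ p x) ∧ ∑ x, p x = 1}

instance (X : Type*) [Fintype X] [Nonempty X] : Nonempty (FinDist X) := by
  refine ⟨⟨fun _ => 1 / Fintype.card X, fun x => by positivity, ?_⟩⟩
  have h : (Fintype.card X : ℝ) ≠ 0 := by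
    exact_mod_cast Fintype.card_ne_zero
  rw [Finset.sum_const, Finset.card_univ, nsmul_eq_mul]
  first
  | exact mul_one_div_cancel h
  | field_simp

/-- Capacity of a classical-quantum channel. -/
def capacity {X m : Type*} [Fintype X] [DecidableEq X] [Fintype m] [DecidableEq m]
    (E : X → Matrix m m ℂ) : ℝ :=
  ⨆ p : FinDist X, mutualInfo (cqState p.1 E)

/-- Kullback–Leibler divergence (in bits) between finitely supported distributions. -/
def klDiv {Y : Type*} [Fintype Y] (P Q : Y → ℝ) : ℝ :=
  ∑ y, P y * Real.logb 2 (P y / Q y)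

/-- ℓ₁ distance between distributions. -/
def l1Dist {Y : Type*} [Fintype Y] (P Q : Y → ℝ) : ℝ := ∑ y, |P y - Q y|

/-- Binary entropy function (in bits). -/
def binH (p : ℝ) : ℝ := Real.binEntropy p / Real.log 2


/-- Plug the value `xi` into coordinate `i`, and `rest` into the remaining coordinates. -/
def insertAt {k : ℕ} {X : Fin k → Type} (i : Fin k) (xi : X i)
    (rest : ∀ j : {j : Fin k // j ≠ i}, X j.1) : ∀ j, X j :=
  fun j => if h : j = i then cast (congrArg X h.symm) xi else rest ⟨j, h⟩

/-!
By the Holevo formula, the mutual information of a cq state is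
`χ(p, E) = S(∑ₓ p x • E x) - ∑ₓ p x * S(E x)`, which is affine in the input distribution `p`.
For a channel `E` on `A × B` and the joint input `q ⊗ ν` this gives the chain rule
`χ(q ⊗ ν, E) = χ(q, F_ν) + ∑ₐ q a * χ(ν a, E a ·)`, where `F_ν a = ∑_b ν a b • E a b` is the
derived channel on `A`. Choosing each `ν a` nearly optimal for the row `E a ·` gives
`min_ν C(F_ν) + min_a C(E a ·) ≤ C(E)`. Induction on the number of coordinates applies this with
`A = Xᵢ` and `B` the product of the other coordinates, since every derived channel of a row
`E a ·` is also an `E`-derived channel.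
-/

namespace Matrix.IsHermitian

variable {n κ : Type*} [Fintype n] [DecidableEq n] [Fintype κ]

theorem sum_comp_eigenvalues_of_charpoly_eq {A : Matrix n n ℂ} (hA : A.IsHermitian) {d : κ → ℝ}
    (h : A.charpoly = ∏ k, (Polynomial.X - Polynomial.C (d k : ℂ))) (f : ℝ → ℝ) :
    ∑ i, f (hA.eigenvalues i) = ∑ k, f (d k) := by
  have hroots := hA.roots_charpoly_eq_eigenvalues
  rw [h, Polynomial.roots_prod _ _ (Finset.prod_ne_zero_iff.mpr fun k _ ↦
    Polynomial.X_sub_C_ne_zero _)] at hroots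
  simp only [Polynomial.roots_X_sub_C, Multiset.bind_singleton] at hroots
  have hmap : Finset.univ.val.map hA.eigenvalues = Finset.univ.val.map d :=
    Multiset.map_injective Complex.ofReal_injective (by simpa [Multiset.map_map] using hroots.symm)
  calc ∑ i, f (hA.eigenvalues i) = ((Finset.univ.val.map hA.eigenvalues).map f).sum := by
        rw [Multiset.map_map]; rfl
    _ = ∑ k, f (d k) := by rw [hmap, Multiset.map_map]; rfl

theorem smul_eq_conj_diagonal {A : Matrix n n ℂ} (hA : A.IsHermitian) (c : ℝ) :
    (c : ℂ) • A = (hA.eigenvectorUnitary : Matrix n n ℂ) *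
      diagonal (fun i ↦ ((c * hA.eigenvalues i : ℝ) : ℂ)) *
      (hA.eigenvectorUnitary : Matrix n n ℂ)ᴴ := by
  conv_lhs => rw [hA.spectral_theorem, Unitary.conjStarAlgAut_apply, star_eq_conjTranspose]
  rw [← Matrix.smul_mul, ← Matrix.mul_smul, ← diagonal_smul]
  congr 3
  ext i
  simp

end Matrix.IsHermitian

theorem Matrix.charpoly_mul_mul_conjTranspose {n : Type*} [Fintype n] [DecidableEq n]
    {U : Matrix n n ℂ} (hU : Uᴴ * U = 1) (D : Matrix n n ℂ) :
    (U * D * Uᴴ).charpoly = D.charpoly := by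
  rw [charpoly_mul_comm, ← mul_assoc, hU, one_mul]

theorem IsDensity.isHermitian {n : Type*} [Fintype n] {ρ : Matrix n n ℂ}
    (hρ : IsDensity ρ) : ρ.IsHermitian :=
  hρ.1.1

theorem IsDensity.sum_eigenvalues {n : Type*} [Fintype n] [DecidableEq n] {ρ : Matrix n n ℂ}
    (hρ : IsDensity ρ) : ∑ i, hρ.isHermitian.eigenvalues i = 1 := by
  have h : ((∑ i, hρ.isHermitian.eigenvalues i : ℝ) : ℂ) = 1 := by
    rw [← hρ.2, hρ.isHermitian.trace_eq_sum_eigenvalues]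
    push_cast
    rfl
  exact_mod_cast h

section CQ
variable {X m : Type*} [DecidableEq X]

theorem cqState_eq_reindex_blockDiagonal (p : X → ℝ) (ρ : X → Matrix m m ℂ) :
    cqState p ρ = reindex (Equiv.prodComm m X) (Equiv.prodComm m X)
      (blockDiagonal fun x ↦ (p x : ℂ) • ρ x) := by
  ext ⟨x, i⟩ ⟨y, j⟩
  simp [cqState, blockDiagonal_apply]

theorem isHermitian_cqState (p : X → ℝ) {ρ : X → Matrix m m ℂ} (hρ : ∀ x, (ρ x).IsHermitian) :
    (cqState p ρ).IsHermitian := by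
  rw [cqState_eq_reindex_blockDiagonal, reindex_apply]
  refine IsHermitian.submatrix ?_ _
  rw [IsHermitian, blockDiagonal_conjTranspose]
  congr 1
  ext1 x
  rw [conjTranspose_smul, (hρ x).eq, Complex.star_def, Complex.conj_ofReal]

theorem ptraceR_cqState [Fintype m] (p : X → ℝ) {ρ : X → Matrix m m ℂ}
    (hρ : ∀ x, (ρ x).trace = 1) :
    ptraceR (cqState p ρ) = diagonal fun x ↦ (p x : ℂ) := by
  ext x y
  by_cases hxy : x = y
  · subst hxy
    simp only [ptraceR, cqState, if_true, ← Finset.mul_sum, diagonal_apply_eq]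
    rw [show ∑ i, ρ x i i = (ρ x).trace from rfl, hρ x, mul_one]
  · simp [ptraceR, cqState, hxy]

theorem ptraceL_cqState [Fintype X] (p : X → ℝ) (ρ : X → Matrix m m ℂ) :
    ptraceL (cqState p ρ) = ∑ x, p x • ρ x := by
  ext i j
  simp [ptraceL, cqState, Matrix.sum_apply, Complex.real_smul]

variable [Fintype X] [Fintype m] [DecidableEq m]

theorem charpoly_cqState (p : X → ℝ) {ρ : X → Matrix m m ℂ} (hρ : ∀ x, (ρ x).IsHermitian) :
    (cqState p ρ).charpoly = ∏ ix : m × X,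
      (Polynomial.X - Polynomial.C ((p ix.2 * (hρ ix.2).eigenvalues ix.1 : ℝ) : ℂ)) := by
  set U := blockDiagonal fun x ↦ ((hρ x).eigenvectorUnitary : Matrix m m ℂ)
  have hU : Uᴴ * U = 1 := by
    rw [blockDiagonal_conjTranspose, ← blockDiagonal_mul]
    simp only [← star_eq_conjTranspose, Unitary.coe_star_mul_self]
    exact blockDiagonal_one
  have hconj : (blockDiagonal fun x ↦ (p x : ℂ) • ρ x) =
      U * diagonal (fun ix : m × X ↦ ((p ix.2 * (hρ ix.2).eigenvalues ix.1 : ℝ) : ℂ)) * Uᴴ := by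
    rw [blockDiagonal_conjTranspose,
      ← blockDiagonal_diagonal fun x i ↦ ((p x * (hρ x).eigenvalues i : ℝ) : ℂ),
      ← blockDiagonal_mul, ← blockDiagonal_mul]
    simp only [(hρ _).smul_eq_conj_diagonal]
  rw [cqState_eq_reindex_blockDiagonal, charpoly_reindex, hconj,
    charpoly_mul_mul_conjTranspose hU, charpoly_diagonal]

theorem vnEntropy_cqState (p : X → ℝ) {ρ : X → Matrix m m ℂ} (hρ : ∀ x, IsDensity (ρ x)) :
    vnEntropy (cqState p ρ) =
      (∑ x, Real.negMulLog (p x)) / Real.log 2 + ∑ x, p x * vnEntropy (ρ x) := by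
  have hH x := (hρ x).isHermitian
  have hrow x : ∑ i, Real.negMulLog (p x * (hH x).eigenvalues i) =
      Real.negMulLog (p x) + p x * ∑ i, Real.negMulLog ((hH x).eigenvalues i) := by
    simp only [Real.negMulLog_mul, Finset.sum_add_distrib, ← Finset.sum_mul, ← Finset.mul_sum,
      (hρ x).sum_eigenvalues, one_mul]
  rw [vnEntropy, dif_pos (isHermitian_cqState p hH),
    (isHermitian_cqState p hH).sum_comp_eigenvalues_of_charpoly_eq (charpoly_cqState p hH),
    Fintype.sum_prod_type_right]
  simp only [hrow, Finset.sum_add_distrib, add_div, Finset.sum_div, vnEntropy, dif_pos (hH _),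
    mul_div_assoc]

theorem vnEntropy_diagonal (p : X → ℝ) :
    vnEntropy (diagonal fun x ↦ (p x : ℂ)) = (∑ x, Real.negMulLog (p x)) / Real.log 2 := by
  have hH : (diagonal fun x ↦ (p x : ℂ)).IsHermitian :=
    isHermitian_diagonal_iff.mpr fun x ↦ by simp [IsSelfAdjoint]
  rw [vnEntropy, dif_pos hH, hH.sum_comp_eigenvalues_of_charpoly_eq (charpoly_diagonal _)]

def holevoInfo (p : X → ℝ) (ρ : X → Matrix m m ℂ) : ℝ :=
  vnEntropy (∑ x, p x • ρ x) - ∑ x, p x * vnEntropy (ρ x)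

theorem mutualInfo_cqState (p : X → ℝ) {ρ : X → Matrix m m ℂ} (hρ : ∀ x, IsDensity (ρ x)) :
    mutualInfo (cqState p ρ) = holevoInfo p ρ := by
  rw [mutualInfo, ptraceR_cqState p fun x ↦ (hρ x).2, ptraceL_cqState, vnEntropy_cqState p hρ,
    vnEntropy_diagonal, holevoInfo]
  ring

end CQ

namespace FinDist
variable {X Y : Type*} [Fintype X] [Fintype Y]

def pure [DecidableEq X] (x : X) : FinDist X :=
  ⟨Pi.single x 1, fun y ↦ by by_cases h : y = x <;> simp [h], by simp⟩

def map [DecidableEq Y] (f : X → Y) (P : FinDist X) : FinDist Y :=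
  ⟨fun y ↦ ∑ x with f x = y, P.1 x, fun _ ↦ Finset.sum_nonneg fun x _ ↦ P.2.1 x, by
    rw [Finset.sum_fiberwise]; exact P.2.2⟩

theorem sum_map_smul [DecidableEq Y] {M : Type*} [AddCommMonoid M] [Module ℝ M] (f : X → Y)
    (P : FinDist X) (g : Y → M) : ∑ y, (P.map f).1 y • g y = ∑ x, P.1 x • g (f x) := by
  simp only [map, Finset.sum_smul]
  rw [← Finset.sum_fiberwise Finset.univ f fun x ↦ P.1 x • g (f x)]
  refine Finset.sum_congr rfl fun y _ ↦ Finset.sum_congr rfl fun x hx ↦ ?_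
  rw [(Finset.mem_filter.1 hx).2]

def compProd (q : FinDist X) (ν : X → FinDist Y) : FinDist (X × Y) :=
  ⟨fun xy ↦ q.1 xy.1 * (ν xy.1).1 xy.2, fun _ ↦ mul_nonneg (q.2.1 _) ((ν _).2.1 _), by
    simp only [Fintype.sum_prod_type, ← Finset.mul_sum, (ν _).2.2, mul_one]
    exact q.2.2⟩

theorem le_sum_mul (P : FinDist X) {f : X → ℝ} {c : ℝ} (h : ∀ x, c ≤ f x) :
    c ≤ ∑ x, P.1 x * f x :=
  calc c = ∑ x, P.1 x * c := by rw [← Finset.sum_mul, P.2.2, one_mul]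
    _ ≤ ∑ x, P.1 x * f x := Finset.sum_le_sum fun x _ ↦ mul_le_mul_of_nonneg_left (h x) (P.2.1 x)

end FinDist

section Density
variable {X n : Type*} [Fintype X] [Fintype n]

theorem IsDensity.sum_smul (P : FinDist X) {ρ : X → Matrix n n ℂ} (hρ : ∀ x, IsDensity (ρ x)) :
    IsDensity (∑ x, P.1 x • ρ x) :=
  ⟨posSemidef_sum _ fun x _ ↦ (hρ x).1.smul (P.2.1 x), by
    simp [trace_sum, trace_smul, (hρ _).2, ← Complex.ofReal_sum, P.2.2]⟩

variable [DecidableEq n]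

theorem IsDensity.vnEntropy_nonneg {ρ : Matrix n n ℂ} (hρ : IsDensity ρ) : 0 ≤ vnEntropy ρ := by
  have hle i : hρ.isHermitian.eigenvalues i ≤ 1 :=
    hρ.sum_eigenvalues ▸ Finset.single_le_sum (fun j _ ↦ hρ.1.eigenvalues_nonneg j)
      (Finset.mem_univ i)
  rw [vnEntropy, dif_pos hρ.isHermitian]
  exact div_nonneg (Finset.sum_nonneg fun i _ ↦ Real.negMulLog_nonneg (hρ.1.eigenvalues_nonneg i)
    (hle i)) (Real.log_nonneg one_le_two)

theorem IsDensity.vnEntropy_le {ρ : Matrix n n ℂ} (hρ : IsDensity ρ) :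
    vnEntropy ρ ≤ Fintype.card n / Real.log 2 := by
  have hle i : Real.negMulLog (hρ.isHermitian.eigenvalues i) ≤ 1 :=
    (Real.negMulLog_le_one_sub_self (hρ.1.eigenvalues_nonneg i)).trans
      (sub_le_self _ (hρ.1.eigenvalues_nonneg i))
  rw [vnEntropy, dif_pos hρ.isHermitian]
  gcongr
  simpa using Finset.sum_le_sum fun i (_ : i ∈ Finset.univ) ↦ hle i

theorem holevoInfo_le_card (P : FinDist X) {ρ : X → Matrix n n ℂ} (hρ : ∀ x, IsDensity (ρ x)) :
    holevoInfo P.1 ρ ≤ Fintype.card n / Real.log 2 := by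
  have hS : 0 ≤ ∑ x, P.1 x * vnEntropy (ρ x) :=
    Finset.sum_nonneg fun x _ ↦ mul_nonneg (P.2.1 x) (hρ x).vnEntropy_nonneg
  have := (IsDensity.sum_smul P hρ).vnEntropy_le
  rw [holevoInfo]
  linarith

end Density

section Capacity
variable {X Y m : Type*} [Fintype X] [Fintype m] [DecidableEq m] {E : X → Matrix m m ℂ}

theorem bddAbove_holevoInfo (hE : ∀ x, IsDensity (E x)) :
    BddAbove (Set.range fun P : FinDist X ↦ holevoInfo P.1 E) :=
  ⟨_, Set.forall_mem_range.2 fun P ↦ holevoInfo_le_card P hE⟩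

variable [DecidableEq X]

theorem capacity_eq_iSup_holevoInfo (hE : ∀ x, IsDensity (E x)) :
    capacity E = ⨆ P : FinDist X, holevoInfo P.1 E := by
  simp only [capacity, mutualInfo_cqState _ hE]

theorem holevoInfo_le_capacity (hE : ∀ x, IsDensity (E x)) (P : FinDist X) :
    holevoInfo P.1 E ≤ capacity E := by
  rw [capacity_eq_iSup_holevoInfo hE]
  exact le_ciSup (bddAbove_holevoInfo hE) P

theorem capacity_le [Nonempty X] (hE : ∀ x, IsDensity (E x)) {c : ℝ}
    (h : ∀ P : FinDist X, holevoInfo P.1 E ≤ c) : capacity E ≤ c := by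
  rw [capacity_eq_iSup_holevoInfo hE]
  exact ciSup_le h

theorem exists_lt_holevoInfo [Nonempty X] (hE : ∀ x, IsDensity (E x)) {c : ℝ}
    (hc : c < capacity E) : ∃ P : FinDist X, c < holevoInfo P.1 E := by
  rw [capacity_eq_iSup_holevoInfo hE] at hc
  exact exists_lt_of_lt_ciSup hc

theorem holevoInfo_pure (x : X) : holevoInfo (FinDist.pure x).1 E = 0 := by
  simp [holevoInfo, FinDist.pure, Pi.single_apply]

theorem capacity_nonneg [Nonempty X] (hE : ∀ x, IsDensity (E x)) : 0 ≤ capacity E :=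
  holevoInfo_pure (E := E) (Classical.arbitrary X) ▸ holevoInfo_le_capacity hE _

theorem holevoInfo_map [Fintype Y] (f : Y → X) (P : FinDist Y) :
    holevoInfo (P.map f).1 E = holevoInfo P.1 (E ∘ f) := by
  have hS := FinDist.sum_map_smul f P fun x ↦ vnEntropy (E x)
  simp only [smul_eq_mul] at hS
  rw [holevoInfo, holevoInfo, FinDist.sum_map_smul, hS]
  rfl

theorem capacity_comp_le [Fintype Y] [DecidableEq Y] [Nonempty Y] (hE : ∀ x, IsDensity (E x))
    (f : Y → X) : capacity (E ∘ f) ≤ capacity E :=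
  capacity_le (fun y ↦ hE (f y)) fun P ↦
    (holevoInfo_map f P).symm.le.trans (holevoInfo_le_capacity hE (P.map f))

end Capacity

section Derived
variable {A B B' m : Type*} [Fintype B] [Fintype m] {E : A → B → Matrix m m ℂ}

def derivedChannel (E : A → B → Matrix m m ℂ) (ν : A → FinDist B) (a : A) : Matrix m m ℂ :=
  ∑ b, (ν a).1 b • E a b

theorem isDensity_derivedChannel (hE : ∀ a b, IsDensity (E a b)) (ν : A → FinDist B) (a : A) :
    IsDensity (derivedChannel E ν a) :=
  IsDensity.sum_smul (ν a) (hE a)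

variable [Fintype A] [DecidableEq m]

theorem holevoInfo_compProd (q : FinDist A) (ν : A → FinDist B) :
    holevoInfo (q.compProd ν).1 (Function.uncurry E) =
      holevoInfo q.1 (derivedChannel E ν) + ∑ a, q.1 a * holevoInfo (ν a).1 (E a) := by
  have hmix : ∑ ab : A × B, (q.compProd ν).1 ab • Function.uncurry E ab =
      ∑ a, q.1 a • derivedChannel E ν a := by
    simp only [FinDist.compProd, Fintype.sum_prod_type, Function.uncurry_apply_pair, mul_smul,
      derivedChannel, Finset.smul_sum]
  have hent : ∑ ab : A × B, (q.compProd ν).1 ab * vnEntropy (Function.uncurry E ab) =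
      ∑ a, q.1 a * ∑ b, (ν a).1 b * vnEntropy (E a b) := by
    simp only [FinDist.compProd, Fintype.sum_prod_type, Function.uncurry_apply_pair, mul_assoc,
      Finset.mul_sum]
  simp only [holevoInfo, hmix, hent, derivedChannel, mul_sub, Finset.sum_sub_distrib]
  ring

variable [DecidableEq A]

def minDerivedCapacity (E : A → B → Matrix m m ℂ) : ℝ :=
  ⨅ ν : A → FinDist B, capacity (derivedChannel E ν)

theorem bddBelow_capacity_derivedChannel [Nonempty A] (hE : ∀ a b, IsDensity (E a b)) :
    BddBelow (Set.range fun ν : A → FinDist B ↦ capacity (derivedChannel E ν)) :=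
  ⟨0, Set.forall_mem_range.2 fun ν ↦ capacity_nonneg (isDensity_derivedChannel hE ν)⟩

theorem capacity_derivedChannel_add_le [DecidableEq B] [Nonempty A]
    (hE : ∀ a b, IsDensity (E a b)) {ν : A → FinDist B} {c : ℝ}
    (hc : ∀ a, c ≤ holevoInfo (ν a).1 (E a)) :
    capacity (derivedChannel E ν) + c ≤ capacity (Function.uncurry E) := by
  rw [← le_sub_iff_add_le]
  refine capacity_le (isDensity_derivedChannel hE ν) fun q ↦ ?_
  have hjoint : holevoInfo (q.compProd ν).1 (Function.uncurry E) ≤ capacity (Function.uncurry E) :=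
    holevoInfo_le_capacity (E := Function.uncurry E) (fun ab ↦ hE ab.1 ab.2) _
  have hrows := q.le_sum_mul hc
  rw [holevoInfo_compProd] at hjoint
  linarith

theorem minDerivedCapacity_add_le [DecidableEq B] [Nonempty A] [Nonempty B]
    (hE : ∀ a b, IsDensity (E a b)) {c : ℝ} (hc : ∀ a, c ≤ capacity (E a)) :
    minDerivedCapacity E + c ≤ capacity (Function.uncurry E) := by
  refine le_of_forall_pos_le_add fun ε hε ↦ ?_
  choose ν hν using fun a ↦ exists_lt_holevoInfo (hE a) ((sub_lt_self c hε).trans_le (hc a))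
  have hmin : minDerivedCapacity E ≤ capacity (derivedChannel E ν) :=
    ciInf_le (bddBelow_capacity_derivedChannel hE) ν
  have := capacity_derivedChannel_add_le hE fun a ↦ (hν a).le
  linarith

theorem minDerivedCapacity_le_comp [Fintype B'] [DecidableEq B] [Nonempty A] [Nonempty B']
    (hE : ∀ a b, IsDensity (E a b)) (g : A → B' → B) :
    minDerivedCapacity E ≤ minDerivedCapacity fun a b' ↦ E a (g a b') :=
  le_ciInf fun ν' ↦ ciInf_le_of_le (bddBelow_capacity_derivedChannel hE) (fun a ↦ (ν' a).map (g a))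
    (le_of_eq (congrArg capacity (funext fun a ↦ FinDist.sum_map_smul (g a) (ν' a) (E a))))

end Derived

section Product
variable {ι : Type*} [DecidableEq ι] {X : ι → Type*} {M : Type*}

def curryAt (E : (∀ i, X i) → M) (i : ι) (xi : X i) (rest : ∀ j : {j // j ≠ i}, X j) : M :=
  E ((Equiv.piSplitAt i X).symm (xi, rest))

theorem curryAt_curryAt (E : (∀ i, X i) → M) {i₀ : ι} (a₀ : X i₀) (i : {j // j ≠ i₀}) :
    curryAt (curryAt E i₀ a₀) i = fun a rest ↦ curryAt E i a
      (fun j ↦ (Equiv.piSplitAt i₀ X).symm (a₀, (Equiv.piSplitAt i _).symm (a, rest)) j) := by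
  funext a rest
  set y := (Equiv.piSplitAt i₀ X).symm (a₀, (Equiv.piSplitAt i _).symm (a, rest))
  have hy : y i = a := by simp [y, Equiv.piSplitAt_symm_apply, i.2]
  show E y = E ((Equiv.piSplitAt i.1 X).symm (a, fun j ↦ y j))
  rw [← hy]
  exact congrArg E ((Equiv.piSplitAt i.1 X).symm_apply_apply y).symm

end Product

section Superadditivity
variable {m : Type*} [Fintype m] [DecidableEq m]

theorem minDerivedCapacity_curryAt_le {ι : Type*} [DecidableEq ι] [Fintype ι] {X : ι → Type*}
    [∀ i, Fintype (X i)] [∀ i, DecidableEq (X i)] [∀ i, Nonempty (X i)]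
    {E : (∀ i, X i) → Matrix m m ℂ} (hE : ∀ x, IsDensity (E x)) {i₀ : ι} (a₀ : X i₀)
    (i : {j // j ≠ i₀}) :
    minDerivedCapacity (curryAt E i) ≤ minDerivedCapacity (curryAt (curryAt E i₀ a₀) i) := by
  rw [curryAt_curryAt]
  exact minDerivedCapacity_le_comp (fun _ _ ↦ hE _) _

theorem sum_minDerivedCapacity_curryAt_le_capacity {ι : Type*} [DecidableEq ι] [Fintype ι]
    {X : ι → Type*} [∀ i, Fintype (X i)] [∀ i, DecidableEq (X i)] [∀ i, Nonempty (X i)]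
    {E : (∀ i, X i) → Matrix m m ℂ} (hE : ∀ x, IsDensity (E x)) :
    ∑ i, minDerivedCapacity (curryAt E i) ≤ capacity E := by
  induction hcard : Fintype.card ι generalizing ι with
  | zero =>
    have := Fintype.card_eq_zero_iff.mp hcard
    simpa using capacity_nonneg hE
  | succ n ih =>
    obtain ⟨i₀⟩ : Nonempty ι := Fintype.card_pos_iff.mp (by omega)
    have hrest (a₀ : X i₀) :
        ∑ i : {j // j ≠ i₀}, minDerivedCapacity (curryAt E i) ≤ capacity (curryAt E i₀ a₀) :=
      calc _ ≤ ∑ i : {j // j ≠ i₀}, minDerivedCapacity (curryAt (curryAt E i₀ a₀) i) :=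
            Finset.sum_le_sum fun i _ ↦ minDerivedCapacity_curryAt_le hE a₀ i
        _ ≤ capacity (curryAt E i₀ a₀) :=
            ih (fun _ ↦ hE _) (by
              rw [Fintype.card_subtype_compl, Fintype.card_subtype_eq, hcard, Nat.add_sub_cancel])
    calc ∑ i, minDerivedCapacity (curryAt E i)
        = minDerivedCapacity (curryAt E i₀) +
            ∑ i : {j // j ≠ i₀}, minDerivedCapacity (curryAt E i) :=
          Fintype.sum_eq_add_sum_subtype_ne _ i₀
      _ ≤ capacity (Function.uncurry (curryAt E i₀)) :=
          minDerivedCapacity_add_le (fun _ _ ↦ hE _) hrest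
      _ ≤ capacity E := capacity_comp_le hE _

end Superadditivity

theorem insertAt_eq_piSplitAt_symm {k : ℕ} {X : Fin k → Type} (i : Fin k) (xi : X i)
    (rest : ∀ j : {j : Fin k // j ≠ i}, X j.1) :
    insertAt i xi rest = (Equiv.piSplitAt i X).symm (xi, rest) := by
  funext j
  by_cases h : j = i
  · subst h
    simp [insertAt]
  · simp [insertAt, h]

/-- superadditivity of channel capacity for a c-q channel on a
`k`-fold product: `C(E) ≥ Σᵢ min_{Fᵢ} C(Fᵢ)` over `E`-derived channels on each `Xᵢ`. -/
theorem stmt5_capacity_superadditive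
    {k : ℕ} {X : Fin k → Type} [∀ i, Fintype (X i)] [∀ i, DecidableEq (X i)]
    [∀ i, Nonempty (X i)]
    {m : Type} [Fintype m] [DecidableEq m]
    (E : (∀ i, X i) → Matrix m m ℂ) (hE : ∀ x, IsDensity (E x)) :
    (∑ i : Fin k,
      ⨅ ν : X i → FinDist (∀ j : {j : Fin k // j ≠ i}, X j.1),
        capacity (fun xi => ∑ rest, (ν xi).1 rest • E (insertAt i xi rest))) ≤
      capacity E := by
  simp only [insertAt_eq_piSplitAt_symm]
  exact sum_minDerivedCapacity_curryAt_le_capacity hE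

end
end

section
/- For any classical channel E : X → (distributions on a finite set Y), with X finite, there exists a probability distribution Q on Y such that for all x ∈ X, D(E(x) ‖ Q) ≤ C(E), where C(E) = max_μ I(X:Y) over input distributions μ and D is Kullback–Leibler divergence. -/
open Matrix BigOperators
open scoped Kronecker ComplexOrder

noncomputable section

/-- Capacity of a classical channel `E : X → (distributions on Y)`, via the
characterization `C(E) = max_μ E_{x←μ}[D(E(x) ‖ output distribution)]`. -/
def capacityC {X Y : Type} [Fintype X] [Fintype Y] (E : X → Y → ℝ) : ℝ :=
  ⨆ μ : FinDist X, ∑ x, μ.1 x * klDiv (E x) (fun y => ∑ x', μ.1 x' * E x' y)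

/-! Let `p` maximize the mutual information `I(p)` over the simplex (it is continuous, being
a difference of entropies), so that `I(p) = C(E)`, and let `Q` be its output distribution.
Moving `p` a step `t` towards the point mass at `x₀` moves the output to
`Q_t = (1 - t) Q + t E(x₀)`, and by the compensation identity
`∑ₓ p(x) D(E(x) ‖ Q_t) = I(p) + D(Q ‖ Q_t) ≥ I(p)`. Optimality of `p` then forces
`D(E(x₀) ‖ Q_t) ≤ I(p)`, and `t → 0` gives `D(E(x₀) ‖ Q) ≤ C(E)`. -/

open Real Set Filter Topology

section KL
variable {Y : Type*} [Fintype Y]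

lemma sub_le_mul_log_div {a b : ℝ} (ha : 0 ≤ a) (hb : 0 ≤ b) (hab : 0 < a → 0 < b) :
    a - b ≤ a * log (a / b) := by
  rcases ha.eq_or_lt with rfl | ha
  · simpa using hb
  have h := one_sub_inv_le_log_of_pos (div_pos ha (hab ha))
  rw [inv_div] at h
  have := mul_le_mul_of_nonneg_left h ha.le
  rwa [mul_sub, mul_one, mul_div_cancel₀ _ ha.ne'] at this

lemma klDiv_nonneg_of_sum_le {P Q : Y → ℝ} (hP : ∀ y, 0 ≤ P y) (hQ : ∀ y, 0 ≤ Q y)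
    (hsum : ∑ y, Q y ≤ ∑ y, P y) (hsupp : ∀ y, 0 < P y → 0 < Q y) : 0 ≤ klDiv P Q := by
  have hterm : ∀ y, (P y - Q y) / log 2 ≤ P y * logb 2 (P y / Q y) := fun y => by
    rw [logb, ← mul_div_assoc]
    exact div_le_div_of_nonneg_right (sub_le_mul_log_div (hP y) (hQ y) (hsupp y))
      (log_pos one_lt_two).le
  calc 0 ≤ ∑ y, (P y - Q y) / log 2 := by
        rw [← Finset.sum_div, Finset.sum_sub_distrib]
        exact div_nonneg (sub_nonneg.2 hsum) (log_pos one_lt_two).le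
    _ ≤ klDiv P Q := Finset.sum_le_sum fun y _ => hterm y

/-- The terms with `Q y = 0`, which `klDiv P Q` drops (`P y / 0 = 0`), are nonnegative along the
segment; the others are continuous at `t = 0`. -/
lemma klDiv_le_of_forall_lineMap_le {P Q : Y → ℝ} {c : ℝ} (hP : ∀ y, 0 ≤ P y)
    (hQ : ∀ y, 0 ≤ Q y)
    (h : ∀ t ∈ Ioo (0 : ℝ) 1, klDiv P (fun y => (1 - t) * Q y + t * P y) ≤ c) :
    klDiv P Q ≤ c := by
  classical
  set s := Finset.univ.filter fun y => 0 < Q y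
  let g : ℝ → Y → ℝ := fun t y => P y * logb 2 (P y / ((1 - t) * Q y + t * P y))
  have hsplit : ∀ t, klDiv P (fun y => (1 - t) * Q y + t * P y)
      = ∑ y ∈ s, g t y + ∑ y ∈ Finset.univ.filter (fun y => ¬ 0 < Q y), g t y :=
    fun t => (Finset.sum_filter_add_sum_filter_not _ _ _).symm
  have hlim : Tendsto (fun t => ∑ y ∈ s, g t y) (𝓝[>] 0) (𝓝 (klDiv P Q)) := by
    have hQs : klDiv P Q = ∑ y ∈ s, g 0 y := by
      rw [klDiv, ← Finset.sum_filter_of_ne (p := fun y => 0 < Q y) fun y _ hy => ?_]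
      · simp [s, g]
      · contrapose! hy
        rw [le_antisymm hy (hQ y), div_zero, logb_zero, mul_zero]
    rw [hQs]
    refine tendsto_finsetSum _ fun y hy => ContinuousAt.continuousWithinAt ?_
    have hQy : 0 < Q y := (Finset.mem_filter.1 hy).2
    rcases (hP y).eq_or_lt with hPy | hPy
    · simp only [g, ← hPy, zero_mul]
      exact continuousAt_const
    refine continuousAt_const.mul (ContinuousAt.logb ?_ ?_)
    · exact continuousAt_const.div (by fun_prop) (by simp [hQy.ne'])
    · simp [hPy.ne', hQy.ne']
  have hle : ∀ᶠ t in 𝓝[>] 0, ∑ y ∈ s, g t y ≤ c := by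
    filter_upwards [Ioo_mem_nhdsGT (zero_lt_one' ℝ)] with t ht
    refine le_trans ?_ ((hsplit t).symm ▸ h t ht)
    refine le_add_of_nonneg_right (Finset.sum_nonneg fun y hy => ?_)
    have hQy : Q y = 0 := le_antisymm (not_lt.1 (Finset.mem_filter.1 hy).2) (hQ y)
    rcases (hP y).eq_or_lt with hPy | hPy
    · simp [g, ← hPy]
    have hdiv : P y / ((1 - t) * Q y + t * P y) = t⁻¹ := by
      rw [hQy, mul_zero, zero_add, div_mul_cancel_right₀ hPy.ne']
    simp only [g, hdiv]
    exact mul_nonneg hPy.le (logb_nonneg one_lt_two (one_le_inv₀ ht.1 |>.2 ht.2.le))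
  exact le_of_tendsto hlim hle

end KL

section Channel
variable {X Y : Type*} [Fintype X] {E : X → Y → ℝ} {p : X → ℝ}

def channelOutput (E : X → Y → ℝ) (p : X → ℝ) : Y → ℝ := fun y => ∑ x, p x * E x y

lemma channelOutput_nonneg (hE : ∀ x y, 0 ≤ E x y) (hp : ∀ x, 0 ≤ p x) (y : Y) :
    0 ≤ channelOutput E p y :=
  Finset.sum_nonneg fun x _ => mul_nonneg (hp x) (hE x y)

lemma mul_le_channelOutput (hE : ∀ x y, 0 ≤ E x y) (hp : ∀ x, 0 ≤ p x) (x : X) (y : Y) :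
    p x * E x y ≤ channelOutput E p y :=
  Finset.single_le_sum (f := fun x => p x * E x y) (fun x _ => mul_nonneg (hp x) (hE x y))
    (Finset.mem_univ x)

variable [Fintype Y]

def channelMutualInfo (E : X → Y → ℝ) (p : X → ℝ) : ℝ :=
  ∑ x, p x * klDiv (E x) (channelOutput E p)

lemma sum_channelOutput (hE : ∀ x, ∑ y, E x y = 1) :
    ∑ y, channelOutput E p y = ∑ x, p x := by
  simp only [channelOutput]
  rw [Finset.sum_comm]
  simp_rw [← Finset.mul_sum, hE, mul_one]

lemma channelMutualInfo_eq_entropy_sub (hE : ∀ x y, 0 ≤ E x y) (hp : ∀ x, 0 ≤ p x) :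
    channelMutualInfo E p = (∑ y, negMulLog (channelOutput E p y)
      - ∑ x, p x * ∑ y, negMulLog (E x y)) / log 2 := by
  have hterm : ∀ x y, p x * (E x y * logb 2 (E x y / channelOutput E p y))
      = (p x * E x y * -log (channelOutput E p y) - p x * negMulLog (E x y)) / log 2 := by
    intro x y
    rcases (mul_nonneg (hp x) (hE x y)).eq_or_lt with h | h
    · rcases mul_eq_zero.1 h.symm with h' | h' <;> simp [h']
    have hQ := h.trans_le (mul_le_channelOutput hE hp x y)
    rw [logb, log_div (pos_of_mul_pos_right h (hp x)).ne' hQ.ne', negMulLog]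
    ring
  have hout : ∀ y, ∑ x, p x * E x y * -log (channelOutput E p y)
      = negMulLog (channelOutput E p y) := fun y => by
    rw [← Finset.sum_mul, negMulLog, neg_mul, mul_neg]
    rfl
  simp only [channelMutualInfo, klDiv, Finset.mul_sum, hterm, ← Finset.sum_div,
    Finset.sum_sub_distrib]
  rw [Finset.sum_comm, Finset.sum_congr rfl fun y _ => hout y]

lemma continuousOn_channelMutualInfo (hE : ∀ x y, 0 ≤ E x y) :
    ContinuousOn (channelMutualInfo E) (stdSimplex ℝ X) := by
  refine ContinuousOn.congr (Continuous.continuousOn ?_)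
    fun p hp => channelMutualInfo_eq_entropy_sub hE hp.1
  simp only [channelOutput]
  fun_prop

lemma exists_isMaxOn_channelMutualInfo [Nonempty X] (hE : ∀ x y, 0 ≤ E x y) :
    ∃ p ∈ stdSimplex ℝ X, IsMaxOn (channelMutualInfo E) (stdSimplex ℝ X) p :=
  (isCompact_stdSimplex ℝ X).exists_isMaxOn
    (isPathConnected_stdSimplex X).nonempty (continuousOn_channelMutualInfo hE)

lemma sum_mul_klDiv_eq_channelMutualInfo_add_klDiv (hE : ∀ x y, 0 ≤ E x y)
    (hp : ∀ x, 0 ≤ p x) {Q : Y → ℝ} (hQ : ∀ y, 0 < channelOutput E p y → 0 < Q y) :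
    ∑ x, p x * klDiv (E x) Q = channelMutualInfo E p + klDiv (channelOutput E p) Q := by
  have hterm : ∀ x y, p x * (E x y * logb 2 (E x y / Q y))
      = p x * (E x y * logb 2 (E x y / channelOutput E p y))
        + p x * E x y * logb 2 (channelOutput E p y / Q y) := by
    intro x y
    rcases (mul_nonneg (hp x) (hE x y)).eq_or_lt with h | h
    · rcases mul_eq_zero.1 h.symm with h' | h' <;> simp [h']
    have hout := h.trans_le (mul_le_channelOutput hE hp x y)
    have hE' := (pos_of_mul_pos_right h (hp x)).ne'
    rw [logb_div hE' (hQ y hout).ne', logb_div hE' hout.ne', logb_div hout.ne' (hQ y hout).ne']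
    ring
  simp only [channelMutualInfo, klDiv, Finset.mul_sum, hterm, Finset.sum_add_distrib]
  rw [Finset.sum_comm (f := fun x y => p x * E x y * _)]
  simp only [← Finset.sum_mul]
  rfl

end Channel

section Capacity
variable {X Y : Type*} [Fintype X] [Fintype Y] {E : X → Y → ℝ} {p : X → ℝ}

lemma klDiv_lineMap_le_channelMutualInfo_of_isMaxOn (hE0 : ∀ x y, 0 ≤ E x y)
    (hE1 : ∀ x, ∑ y, E x y = 1) (hp : p ∈ stdSimplex ℝ X)
    (hmax : IsMaxOn (channelMutualInfo E) (stdSimplex ℝ X) p) (x₀ : X) {t : ℝ}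
    (ht : t ∈ Ioo (0 : ℝ) 1) :
    klDiv (E x₀) (fun y => (1 - t) * channelOutput E p y + t * E x₀ y)
      ≤ channelMutualInfo E p := by
  classical
  set Qt : Y → ℝ := fun y => (1 - t) * channelOutput E p y + t * E x₀ y
  set pt : X → ℝ := (1 - t) • p + t • Pi.single x₀ 1
  have hpt : pt ∈ stdSimplex ℝ X :=
    convex_stdSimplex ℝ X hp (single_mem_stdSimplex ℝ x₀) (sub_nonneg.2 ht.2.le) ht.1.le
      (by ring)
  have hmix : ∀ f : X → ℝ, ∑ x, pt x * f x = (1 - t) * ∑ x, p x * f x + t * f x₀ := by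
    intro f
    simp [pt, add_mul, Finset.sum_add_distrib, Finset.mul_sum, mul_assoc, Pi.single_apply]
  have hout : channelOutput E pt = Qt := funext fun y => hmix (E · y)
  have hQt : ∀ y, 0 < channelOutput E p y → 0 < Qt y := fun y hy => by
    have := mul_nonneg ht.1.le (hE0 x₀ y)
    have := mul_pos (sub_pos.2 ht.2) hy
    simp only [Qt]
    linarith
  have hgibbs : channelMutualInfo E p ≤ ∑ x, p x * klDiv (E x) Qt := by
    rw [sum_mul_klDiv_eq_channelMutualInfo_add_klDiv hE0 hp.1 hQt]
    refine le_add_of_nonneg_right (klDiv_nonneg_of_sum_le (channelOutput_nonneg hE0 hp.1)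
      (hout ▸ channelOutput_nonneg hE0 hpt.1) (le_of_eq ?_) hQt)
    rw [← hout, sum_channelOutput hE1, sum_channelOutput hE1, hpt.2, hp.2]
  have hdecomp : channelMutualInfo E pt
      = (1 - t) * ∑ x, p x * klDiv (E x) Qt + t * klDiv (E x₀) Qt := by
    rw [channelMutualInfo, hout, hmix]
  have hle : channelMutualInfo E pt ≤ channelMutualInfo E p := hmax hpt
  refine le_of_mul_le_mul_left ?_ ht.1
  linarith [mul_le_mul_of_nonneg_left hgibbs (sub_nonneg.2 ht.2.le)]

lemma capacityC_eq_channelMutualInfo_of_isMaxOn {X Y : Type} [Fintype X] [Fintype Y]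
    {E : X → Y → ℝ} {p : X → ℝ} (hp : p ∈ stdSimplex ℝ X)
    (hmax : IsMaxOn (channelMutualInfo E) (stdSimplex ℝ X) p) :
    capacityC E = channelMutualInfo E p :=
  IsGreatest.csSup_eq ⟨⟨⟨p, hp⟩, rfl⟩, by rintro _ ⟨μ, rfl⟩; exact hmax μ.2⟩

end Capacity

theorem stmt7_exists_good_output_distribution_general
    {X Y : Type} [Fintype X] [Fintype Y] [Nonempty X]
    (E : X → Y → ℝ) (hE0 : ∀ x y, 0 ≤ E x y) (hE1 : ∀ x, ∑ y, E x y = 1) :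
    ∃ Q : Y → ℝ, (∀ y, 0 ≤ Q y) ∧ (∑ y, Q y = 1) ∧
      ∀ x, klDiv (E x) Q ≤ capacityC E := by
  obtain ⟨p, hp, hmax⟩ := exists_isMaxOn_channelMutualInfo hE0
  refine ⟨channelOutput E p, channelOutput_nonneg hE0 hp.1,
    (sum_channelOutput hE1).trans hp.2, fun x => ?_⟩
  rw [capacityC_eq_channelMutualInfo_of_isMaxOn hp hmax]
  exact klDiv_le_of_forall_lineMap_le (hE0 x) (channelOutput_nonneg hE0 hp.1)
    fun t ht => klDiv_lineMap_le_channelMutualInfo_of_isMaxOn hE0 hE1 hp hmax x ht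

/-- for any classical channel `E` there exists an output distribution
`Q` with `D(E(x) ‖ Q) ≤ C(E)` for all `x`. -/
theorem stmt7_exists_good_output_distribution
    {X Y : Type} [Fintype X] [Fintype Y] [Nonempty X] [Nonempty Y]
    (E : X → Y → ℝ) (hE0 : ∀ x y, 0 ≤ E x y) (hE1 : ∀ x, ∑ y, E x y = 1) :
    ∃ Q : Y → ℝ, (∀ y, 0 ≤ Q y) ∧ (∑ y, Q y = 1) ∧
      ∀ x, klDiv (E x) Q ≤ capacityC E :=
  stmt7_exists_good_output_distribution_general E hE0 hE1

end
end

section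
/- For density matrices ρ, σ, the trace distance is bounded by relative entropy: ‖ρ − σ‖₁ ≤ √2 · S(ρ‖σ)^{1/2}. -/
open Matrix BigOperators
open scoped Kronecker ComplexOrder

noncomputable section

/-!
Write `ρ = ∑ pᵢ |uᵢ⟩⟨uᵢ|`, `σ = ∑ qⱼ |vⱼ⟩⟨vⱼ|` and `wᵢⱼ = |⟨uᵢ, vⱼ⟩|²`, a doubly stochastic
matrix. Then `S(ρ‖σ) · ln 2 = ∑ wᵢⱼ (pᵢ ln pᵢ - pᵢ ln qⱼ - pᵢ + qⱼ)`, and the scalar inequality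
`ln 2 · (x - y)² / (x + y) ≤ x ln (x / y) - x + y` bounds this below by `ln 2 · Δ`, where
`Δ = ∑ wᵢⱼ (pᵢ - qⱼ)² / (pᵢ + qⱼ)`. On the other side `‖ρ - σ‖₁ = Tr K (ρ - σ)` for a unitary `K`
(the sign of `ρ - σ`), and `Tr K (ρ - σ) = ∑ (pᵢ - qⱼ) ⟨uᵢ|K|vⱼ⟩ ⟨vⱼ|uᵢ⟩`. Cauchy–Schwarz with
weights `pᵢ + qⱼ` gives `‖ρ - σ‖₁² ≤ (Tr ρ + Tr σ) · Δ = 2Δ`, because `|⟨uᵢ|K|vⱼ⟩|²` is again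
doubly stochastic.
-/

section Scalar

open Real Set

theorem ConvexOn.isMinOn_of_hasDerivAt_eq_zero {S : Set ℝ} {g : ℝ → ℝ} {a : ℝ}
    (hg : ConvexOn ℝ S g) (ha : a ∈ S) (hd : HasDerivAt g 0 a) : IsMinOn g S a := by
  refine isMinOn_iff.2 fun x hx => ?_
  rcases lt_trichotomy a x with hax | rfl | hxa
  · have h := hg.le_slope_of_hasDerivAt ha hx hax hd
    rwa [slope_def_field, le_div_iff₀ (sub_pos.2 hax), zero_mul, sub_nonneg] at h
  · exact le_rfl
  · have h := hg.slope_le_of_hasDerivAt hx ha hxa hd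
    rwa [slope_def_field, div_le_iff₀ (sub_pos.2 hxa), zero_mul, sub_nonpos] at h

/-- The scalar inequality with `t = x / y` and denominators cleared; this function is convex on
`[0, ∞)` with a double zero at `t = 1`. -/
def pinskerGap (t : ℝ) : ℝ := (t + 1) * (t * log t - t + 1) - log 2 * (t - 1) ^ 2

lemma hasDerivAt_pinskerGap {t : ℝ} (ht : t ≠ 0) :
    HasDerivAt pinskerGap ((2 * t + 1) * log t - (1 + 2 * log 2) * (t - 1)) t := by
  refine ((((hasDerivAt_id' t).add_const 1).fun_mul
    (((hasDerivAt_mul_log ht).fun_sub (hasDerivAt_id' t)).add_const 1)).fun_sub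
    ((((hasDerivAt_id' t).sub_const 1).fun_pow 2).const_mul (log 2))).congr_deriv ?_
  ring

lemma hasDerivAt_deriv_pinskerGap {t : ℝ} (ht : t ≠ 0) :
    HasDerivAt (fun t => (2 * t + 1) * log t - (1 + 2 * log 2) * (t - 1))
      (2 * log t + 1 / t + 1 - 2 * log 2) t := by
  refine (((((hasDerivAt_id' t).const_mul 2).add_const 1).fun_mul (hasDerivAt_log ht)).fun_sub
    (((hasDerivAt_id' t).sub_const 1).const_mul (1 + 2 * log 2))).congr_deriv ?_
  field_simp
  ring

lemma convexOn_pinskerGap : ConvexOn ℝ (Ici 0) pinskerGap := by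
  have hcont : Continuous pinskerGap := by
    have := continuous_mul_log
    unfold pinskerGap
    fun_prop
  refine convexOn_of_hasDerivWithinAt2_nonneg (convex_Ici 0) hcont.continuousOn
    (f' := fun t => (2 * t + 1) * log t - (1 + 2 * log 2) * (t - 1))
    (f'' := fun t => 2 * log t + 1 / t + 1 - 2 * log 2)
    (fun t ht => ?_) (fun t ht => ?_) (fun t ht => ?_)
  all_goals rw [interior_Ici] at *
  · exact (hasDerivAt_pinskerGap ht.ne').hasDerivWithinAt
  · exact (hasDerivAt_deriv_pinskerGap ht.ne').hasDerivWithinAt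
  · -- `ln (2t) ≥ 1 - 1 / (2t)` bounds the second derivative below by `3 - 4 ln 2 > 0`.
    have h2t := one_sub_inv_le_log_of_pos (mul_pos two_pos (mem_Ioi.1 ht))
    rw [log_mul two_ne_zero ht.ne', mul_inv] at h2t
    rw [one_div]
    nlinarith [log_two_lt_d9, inv_pos.2 (mem_Ioi.1 ht)]

lemma log_two_mul_sub_one_sq_le {t : ℝ} (ht : 0 ≤ t) :
    log 2 * (t - 1) ^ 2 ≤ (t + 1) * (t * log t - t + 1) := by
  have hmin := convexOn_pinskerGap.isMinOn_of_hasDerivAt_eq_zero (mem_Ici.2 zero_le_one)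
    (by simpa using hasDerivAt_pinskerGap one_ne_zero) (mem_Ici.2 ht)
  simp only [pinskerGap, mem_ofPred_eq] at hmin
  norm_num at hmin
  linarith

theorem log_two_mul_sq_div_add_le {x y : ℝ} (hx : 0 ≤ x) (hy : 0 < y) :
    log 2 * ((x - y) ^ 2 / (x + y)) ≤ x * (log x - log y) - x + y := by
  have ht := log_two_mul_sub_one_sq_le (div_nonneg hx hy.le)
  have hlog : x * log (x / y) = x * (log x - log y) := by
    rcases hx.eq_or_lt with rfl | hx
    · simp
    · rw [log_div hx.ne' hy.ne']
  rw [mul_div_assoc', div_le_iff₀ (by linarith), ← hlog]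
  calc log 2 * (x - y) ^ 2 = log 2 * (x / y - 1) ^ 2 * (y * y) := by field_simp
    _ ≤ (x / y + 1) * (x / y * log (x / y) - x / y + 1) * (y * y) := by gcongr
    _ = (x * log (x / y) - x + y) * (x + y) := by field_simp

end Scalar

section Spectral

variable {𝕜 n : Type*} [RCLike 𝕜] [Fintype n] [DecidableEq n]

lemma Matrix.sum_norm_sq_row_eq_one {U : Matrix n n 𝕜} (hU : U ∈ unitaryGroup n 𝕜) (i : n) :
    ∑ j, ‖U i j‖ ^ 2 = 1 := by
  have h := congr_fun₂ (mem_unitaryGroup_iff.1 hU) i i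
  simp only [mul_apply, star_apply, RCLike.star_def, RCLike.mul_conj, one_apply_eq] at h
  exact_mod_cast h

lemma Matrix.sum_norm_sq_col_eq_one {U : Matrix n n 𝕜} (hU : U ∈ unitaryGroup n 𝕜) (j : n) :
    ∑ i, ‖U i j‖ ^ 2 = 1 := by
  have h := congr_fun₂ (mem_unitaryGroup_iff'.1 hU) j j
  simp only [mul_apply, star_apply, RCLike.star_def, RCLike.conj_mul, one_apply_eq] at h
  exact_mod_cast h

lemma Matrix.IsHermitian.eq_eigenvectorUnitary_mul_diagonal {A : Matrix n n 𝕜}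
    (hA : A.IsHermitian) :
    A = (hA.eigenvectorUnitary : Matrix n n 𝕜) * diagonal (fun i => (hA.eigenvalues i : 𝕜)) *
      (hA.eigenvectorUnitary : Matrix n n 𝕜)ᴴ :=
  hA.spectral_theorem

lemma Matrix.trace_mul_conj_diagonal (K U : Matrix n n 𝕜) (d : n → 𝕜) :
    (K * (U * diagonal d * Uᴴ)).trace = ∑ i, d i * (Uᴴ * K * U) i i := by
  rw [← Matrix.mul_assoc, trace_mul_comm, ← Matrix.mul_assoc, ← Matrix.mul_assoc, trace,
    Finset.sum_congr rfl fun i _ => ?_]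
  rw [diag_apply, mul_diagonal, mul_comm]

lemma Matrix.trace_mul_conj_diagonal_sub_conj_diagonal {U V : Matrix n n 𝕜}
    (hU : U ∈ unitaryGroup n 𝕜) (hV : V ∈ unitaryGroup n 𝕜) (K : Matrix n n 𝕜) (f g : n → ℝ) :
    (K * (U * diagonal (fun i => (f i : 𝕜)) * Uᴴ - V * diagonal (fun j => (g j : 𝕜)) * Vᴴ)).trace
      = ∑ i, ∑ j, ((f i - g j : ℝ) : 𝕜) * (Uᴴ * K * V) i j * star ((Uᴴ * V) i j) := by
  have hUU : U * Uᴴ = 1 := mem_unitaryGroup_iff.1 hU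
  have hVV : V * Vᴴ = 1 := mem_unitaryGroup_iff.1 hV
  have hKU : Uᴴ * K * U = (Uᴴ * K * V) * (Uᴴ * V)ᴴ := by
    rw [conjTranspose_mul, conjTranspose_conjTranspose]
    simp only [Matrix.mul_assoc, ← Matrix.mul_assoc V, hVV, Matrix.one_mul]
  have hKV : Vᴴ * K * V = (Uᴴ * V)ᴴ * (Uᴴ * K * V) := by
    rw [conjTranspose_mul, conjTranspose_conjTranspose]
    simp only [Matrix.mul_assoc, ← Matrix.mul_assoc U, hUU, Matrix.one_mul]
  rw [Matrix.mul_sub, trace_sub, trace_mul_conj_diagonal, trace_mul_conj_diagonal, hKU, hKV]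
  generalize Uᴴ * K * V = M
  generalize Uᴴ * V = W
  simp only [mul_apply, conjTranspose_apply, Finset.mul_sum]
  rw [Finset.sum_comm (f := fun j i => (g j : 𝕜) * (star (W i j) * M i j)),
    ← Finset.sum_sub_distrib]
  refine Finset.sum_congr rfl fun i _ => ?_
  rw [← Finset.sum_sub_distrib]
  refine Finset.sum_congr rfl fun j _ => ?_
  push_cast
  ring

lemma Matrix.trace_conj_diagonal_mul_sub {U V : Matrix n n 𝕜}
    (hU : U ∈ unitaryGroup n 𝕜) (hV : V ∈ unitaryGroup n 𝕜) (p f g : n → ℝ) :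
    ((U * diagonal (fun i => (p i : 𝕜)) * Uᴴ) *
      (U * diagonal (fun i => (f i : 𝕜)) * Uᴴ - V * diagonal (fun j => (g j : 𝕜)) * Vᴴ)).trace
      = ((∑ i, ∑ j, ‖(Uᴴ * V) i j‖ ^ 2 * (p i * (f i - g j)) : ℝ) : 𝕜) := by
  have hUU : Uᴴ * U = 1 := mem_unitaryGroup_iff'.1 hU
  have hpW : Uᴴ * (U * diagonal (fun i => (p i : 𝕜)) * Uᴴ) * V
      = diagonal (fun i => (p i : 𝕜)) * (Uᴴ * V) := by
    simp only [Matrix.mul_assoc, ← Matrix.mul_assoc Uᴴ U, hUU, Matrix.one_mul]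
  rw [trace_mul_conj_diagonal_sub_conj_diagonal hU hV, hpW]
  push_cast
  refine Finset.sum_congr rfl fun i _ => Finset.sum_congr rfl fun j _ => ?_
  rw [diagonal_mul, RCLike.star_def, mul_assoc, mul_assoc, RCLike.mul_conj]
  ring

lemma Matrix.IsHermitian.exists_mem_unitaryGroup_trace_mul_eq {A : Matrix n n 𝕜}
    (hA : A.IsHermitian) :
    ∃ K ∈ unitaryGroup n 𝕜, (K * A).trace = ((∑ i, |hA.eigenvalues i| : ℝ) : 𝕜) := by
  set E : Matrix n n 𝕜 := (hA.eigenvectorUnitary : Matrix n n 𝕜)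
  have hE : E ∈ unitaryGroup n 𝕜 := hA.eigenvectorUnitary.2
  set s : n → ℝ := fun i => if 0 ≤ hA.eigenvalues i then 1 else -1
  have hs : diagonal (fun i => (s i : 𝕜)) ∈ unitaryGroup n 𝕜 := by
    rw [mem_unitaryGroup_iff, star_eq_conjTranspose, diagonal_conjTranspose, diagonal_mul_diagonal,
      ← diagonal_one]
    congr 1
    funext i
    by_cases h : 0 ≤ hA.eigenvalues i <;> simp [s, h]
  refine ⟨E * diagonal (fun i => (s i : 𝕜)) * Eᴴ, mul_mem (mul_mem hE hs) (Unitary.star_mem hE), ?_⟩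
  have hEE : Eᴴ * E = 1 := mem_unitaryGroup_iff'.1 hE
  have hED : Eᴴ * (E * diagonal (fun i => (s i : 𝕜)) * Eᴴ) * E = diagonal (fun i => (s i : 𝕜)) := by
    simp only [Matrix.mul_assoc, hEE, Matrix.mul_one, ← Matrix.mul_assoc Eᴴ E, Matrix.one_mul]
  conv_lhs => rw [hA.eq_eigenvectorUnitary_mul_diagonal]
  rw [trace_mul_conj_diagonal, hED]
  push_cast
  refine Finset.sum_congr rfl fun i _ => ?_
  by_cases h : 0 ≤ hA.eigenvalues i
  · simp [s, h, abs_of_nonneg h]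
  · simp [s, h, abs_of_neg (not_le.1 h)]

/-- The triangular discrimination `∑ (P - Q)² / (P + Q)` of the Nussbaum–Szkoła distributions
`P (i, j) = pᵢ wᵢⱼ`, `Q (i, j) = qⱼ wᵢⱼ`, where `wᵢⱼ = ‖(Uᴴ * V) i j‖ ^ 2`. -/
def nussbaumSzkolaDiscrimination (U V : Matrix n n 𝕜) (p q : n → ℝ) : ℝ :=
  ∑ i, ∑ j, ‖(Uᴴ * V) i j‖ ^ 2 * (p i - q j) ^ 2 / (p i + q j)

lemma Matrix.norm_trace_mul_conj_diagonal_sub_sq_le {U V K : Matrix n n 𝕜}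
    (hU : U ∈ unitaryGroup n 𝕜) (hV : V ∈ unitaryGroup n 𝕜) (hK : K ∈ unitaryGroup n 𝕜)
    {p q : n → ℝ} (hp : ∀ i, 0 ≤ p i) (hq : ∀ j, 0 < q j) :
    ‖(K * (U * diagonal (fun i => (p i : 𝕜)) * Uᴴ -
        V * diagonal (fun j => (q j : 𝕜)) * Vᴴ)).trace‖ ^ 2
      ≤ (∑ i, p i + ∑ j, q j) * nussbaumSzkolaDiscrimination U V p q := by
  have hM : Uᴴ * K * V ∈ unitaryGroup n 𝕜 := mul_mem (mul_mem (Unitary.star_mem hU) hK) hV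
  rw [trace_mul_conj_diagonal_sub_conj_diagonal hU hV, nussbaumSzkolaDiscrimination]
  generalize Uᴴ * K * V = M at hM ⊢
  generalize Uᴴ * V = W
  have hpq : ∀ i j, 0 < p i + q j := fun i j => add_pos_of_nonneg_of_pos (hp i) (hq j)
  have htri : ‖∑ i, ∑ j, ((p i - q j : ℝ) : 𝕜) * M i j * star (W i j)‖
      ≤ ∑ z : n × n, |p z.1 - q z.2| * ‖M z.1 z.2‖ * ‖W z.1 z.2‖ := by
    rw [Fintype.sum_prod_type]
    refine (norm_sum_le _ _).trans (Finset.sum_le_sum fun i _ => (norm_sum_le _ _).trans_eq ?_)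
    simp only [norm_mul, norm_star, RCLike.norm_ofReal]
  have hCS := Finset.sum_sq_le_sum_mul_sum_of_sq_le_mul Finset.univ
    (r := fun z : n × n => |p z.1 - q z.2| * ‖M z.1 z.2‖ * ‖W z.1 z.2‖)
    (f := fun z => (p z.1 + q z.2) * ‖M z.1 z.2‖ ^ 2)
    (g := fun z => ‖W z.1 z.2‖ ^ 2 * (p z.1 - q z.2) ^ 2 / (p z.1 + q z.2))
    (fun z _ => mul_nonneg (hpq _ _).le (sq_nonneg _))
    (fun z _ => div_nonneg (mul_nonneg (sq_nonneg _) (sq_nonneg _)) (hpq _ _).le)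
    (fun z _ => by
      have := (hpq z.1 z.2).ne'
      field_simp
      rw [sq_abs])
  have hf : ∑ z : n × n, (p z.1 + q z.2) * ‖M z.1 z.2‖ ^ 2 = ∑ i, p i + ∑ j, q j := by
    simp only [add_mul, Finset.sum_add_distrib, Fintype.sum_prod_type]
    rw [Finset.sum_comm (f := fun i j => q j * ‖M i j‖ ^ 2)]
    simp only [← Finset.mul_sum, sum_norm_sq_row_eq_one hM, sum_norm_sq_col_eq_one hM, mul_one]
  rw [hf, Fintype.sum_prod_type (f := fun z => ‖W z.1 z.2‖ ^ 2 * _ / _)] at hCS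
  calc _ ≤ (∑ z : n × n, |p z.1 - q z.2| * ‖M z.1 z.2‖ * ‖W z.1 z.2‖) ^ 2 := by gcongr
    _ ≤ _ := hCS

lemma log_two_mul_nussbaumSzkolaDiscrimination_le {U V : Matrix n n 𝕜}
    (hU : U ∈ unitaryGroup n 𝕜) (hV : V ∈ unitaryGroup n 𝕜) {p q : n → ℝ}
    (hp : ∀ i, 0 ≤ p i) (hq : ∀ j, 0 < q j) (hpq : ∑ i, p i = ∑ j, q j) :
    Real.log 2 * nussbaumSzkolaDiscrimination U V p q
      ≤ ∑ i, ∑ j, ‖(Uᴴ * V) i j‖ ^ 2 * (p i * (Real.log (p i) - Real.log (q j))) := by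
  have hW : Uᴴ * V ∈ unitaryGroup n 𝕜 := mul_mem (Unitary.star_mem hU) hV
  rw [nussbaumSzkolaDiscrimination]
  generalize Uᴴ * V = W at hW ⊢
  have hzero : ∑ i, ∑ j, ‖W i j‖ ^ 2 * (q j - p i) = 0 := by
    simp only [mul_sub, Finset.sum_sub_distrib]
    rw [Finset.sum_comm (f := fun i j => ‖W i j‖ ^ 2 * q j)]
    simp only [← Finset.sum_mul, sum_norm_sq_row_eq_one hW, sum_norm_sq_col_eq_one hW, one_mul,
      hpq, sub_self]
  calc Real.log 2 * ∑ i, ∑ j, ‖W i j‖ ^ 2 * (p i - q j) ^ 2 / (p i + q j)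
      = ∑ i, ∑ j, ‖W i j‖ ^ 2 * (Real.log 2 * ((p i - q j) ^ 2 / (p i + q j))) := by
        simp only [Finset.mul_sum]
        exact Finset.sum_congr rfl fun i _ => Finset.sum_congr rfl fun j _ => by ring
    _ ≤ ∑ i, ∑ j, ‖W i j‖ ^ 2 * (p i * (Real.log (p i) - Real.log (q j)) - p i + q j) := by
        gcongr with i _ j _
        exact log_two_mul_sq_div_add_le (hp i) (hq j)
    _ = ∑ i, ∑ j, ‖W i j‖ ^ 2 * (p i * (Real.log (p i) - Real.log (q j)))
          + ∑ i, ∑ j, ‖W i j‖ ^ 2 * (q j - p i) := by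
        simp only [← Finset.sum_add_distrib]
        exact Finset.sum_congr rfl fun i _ => Finset.sum_congr rfl fun j _ => by ring
    _ = _ := by rw [hzero, add_zero]

end Spectral

section DensityMatrix

variable {n : Type*} [Fintype n] [DecidableEq n] {ρ σ : Matrix n n ℂ}

lemma relEntropy_mul_log_two (hρ : ρ.IsHermitian) (hσ : σ.IsHermitian) :
    relEntropy ρ σ * Real.log 2 = ∑ i, ∑ j,
      ‖((hρ.eigenvectorUnitary : Matrix n n ℂ)ᴴ * hσ.eigenvectorUnitary) i j‖ ^ 2 *
        (hρ.eigenvalues i * (Real.log (hρ.eigenvalues i) - Real.log (hσ.eigenvalues j))) := by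
  have h := trace_conj_diagonal_mul_sub hρ.eigenvectorUnitary.2 hσ.eigenvectorUnitary.2
    hρ.eigenvalues (fun i => Real.log (hρ.eigenvalues i)) (fun j => Real.log (hσ.eigenvalues j))
  rw [← hρ.eq_eigenvectorUnitary_mul_diagonal] at h
  rw [relEntropy, matFun, matFun, dif_pos hρ, dif_pos hσ,
    div_mul_cancel₀ _ (Real.log_pos one_lt_two).ne']
  exact_mod_cast congrArg Complex.re h

lemma nussbaumSzkolaDiscrimination_le_relEntropy (hρ : ρ.PosSemidef) (hσ : σ.PosDef)
    (htr : ρ.trace = σ.trace) :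
    nussbaumSzkolaDiscrimination (hρ.1.eigenvectorUnitary : Matrix n n ℂ)
      hσ.1.eigenvectorUnitary hρ.1.eigenvalues hσ.1.eigenvalues ≤ relEntropy ρ σ := by
  have hsum : ∑ i, hρ.1.eigenvalues i = ∑ j, hσ.1.eigenvalues j := by
    simpa using congrArg Complex.re
      (hρ.1.trace_eq_sum_eigenvalues.symm.trans (htr.trans hσ.1.trace_eq_sum_eigenvalues))
  refine le_of_mul_le_mul_left ?_ (Real.log_pos one_lt_two)
  rw [mul_comm _ (relEntropy ρ σ), relEntropy_mul_log_two hρ.1 hσ.1]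
  exact log_two_mul_nussbaumSzkolaDiscrimination_le hρ.1.eigenvectorUnitary.2
    hσ.1.eigenvectorUnitary.2 hρ.eigenvalues_nonneg hσ.eigenvalues_pos hsum

lemma traceNorm_sub_sq_le (hρ : ρ.PosSemidef) (hσ : σ.PosDef) :
    traceNorm (ρ - σ) ^ 2 ≤ (ρ.trace + σ.trace).re *
      nussbaumSzkolaDiscrimination (hρ.1.eigenvectorUnitary : Matrix n n ℂ)
        hσ.1.eigenvectorUnitary hρ.1.eigenvalues hσ.1.eigenvalues := by
  obtain ⟨K, hK, hKtr⟩ := (hρ.1.sub hσ.1).exists_mem_unitaryGroup_trace_mul_eq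
  have h := norm_trace_mul_conj_diagonal_sub_sq_le hρ.1.eigenvectorUnitary.2
    hσ.1.eigenvectorUnitary.2 hK hρ.eigenvalues_nonneg hσ.eigenvalues_pos
  rw [← hρ.1.eq_eigenvectorUnitary_mul_diagonal, ← hσ.1.eq_eigenvectorUnitary_mul_diagonal,
    hKtr, RCLike.norm_ofReal, sq_abs] at h
  rw [traceNorm, dif_pos (hρ.1.sub hσ.1), hρ.1.trace_eq_sum_eigenvalues,
    hσ.1.trace_eq_sum_eigenvalues]
  simpa using h

end DensityMatrix

/-- quantum Pinsker inequality `‖ρ − σ‖₁ ≤ √2 · S(ρ‖σ)^{1/2}`. -/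
theorem stmt9_quantum_pinsker
    {m : Type} [Fintype m] [DecidableEq m]
    (ρ σ : Matrix m m ℂ) (hρ : IsDensity ρ) (hσ : σ.PosDef) (hσt : σ.trace = 1) :
    traceNorm (ρ - σ) ≤ Real.sqrt 2 * Real.sqrt (relEntropy ρ σ) := by
  obtain ⟨hρ, hρt⟩ := hρ
  have hT := traceNorm_sub_sq_le hρ hσ
  have hS := nussbaumSzkolaDiscrimination_le_relEntropy hρ hσ (hρt.trans hσt.symm)
  rw [hρt, hσt] at hT
  norm_num at hT
  calc traceNorm (ρ - σ) ≤ Real.sqrt (2 * _) := Real.le_sqrt_of_sq_le hT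
    _ = Real.sqrt 2 * Real.sqrt _ := Real.sqrt_mul zero_le_two _
    _ ≤ Real.sqrt 2 * Real.sqrt (relEntropy ρ σ) := by gcongr
end
end
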